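/- Let Σ be a polyhedral obstacle in ℝ^N, i.e., a finite union of N-dimensional compact polyhedra equal to the closure of its interior with connected complement. If P is a vertex (0-face) of Σ, then the linear span of the unit normals to all (N−1)-faces of Σ containing P is all of ℝ^N. -/
import Mathlib


open scoped RealInnerProductSpace

/-- The hyperplane through `p` with normal `ν`, as a set. -/
def hypPlane {N : ℕ} (p ν : EuclideanSpace ℝ (Fin N)) : Set (EuclideanSpace ℝ (Fin N)) :=
  {x | ⟪x - p, ν⟫ = 0}

lemma hypPlane_isClosed {N : ℕ} (p ν : EuclideanSpace ℝ (Fin N)) :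
    IsClosed (hypPlane p ν) :=
  isClosed_eq ((continuous_id.sub continuous_const).inner continuous_const) continuous_const

lemma hypPlane_compl_dense {N : ℕ} (p ν : EuclideanSpace ℝ (Fin N)) (hν : ν ≠ 0) :
    Dense (hypPlane p ν)ᶜ := by
  rw [Metric.dense_iff]
  intro x r hr
  by_cases hx : x ∈ hypPlane p ν
  · refine ⟨x + (r / (2 * ‖ν‖)) • ν, ?_, ?_⟩
    · rw [Metric.mem_ball, dist_eq_norm]
      have hν' : 0 < ‖ν‖ := norm_pos_iff.mpr hν
      have : x + (r / (2 * ‖ν‖)) • ν - x = (r / (2 * ‖ν‖)) • ν := by abel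
      rw [this, norm_smul, Real.norm_eq_abs, abs_of_pos (by positivity)]
      rw [div_mul_eq_mul_div, mul_comm 2 ‖ν‖, ← div_div, mul_div_assoc,
        div_self (ne_of_gt hν'), mul_one]
      linarith
    · simp only [hypPlane, Set.mem_compl_iff, Set.mem_setOf_eq] at hx ⊢
      have : x + (r / (2 * ‖ν‖)) • ν - p = (x - p) + (r / (2 * ‖ν‖)) • ν := by abel
      rw [this, inner_add_left, hx, real_inner_smul_left, real_inner_self_eq_norm_sq]
      have hν' : 0 < ‖ν‖ := norm_pos_iff.mpr hν
      positivity
  · exact ⟨x, Metric.mem_ball_self hr, hx⟩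

/-- for a polyhedral obstacle `Σ` (a compact set, equal to the closure of its
interior, with connected complement, whose boundary lies in finitely many pairwise distinct
hyperplanes), if `P` is a vertex of `Σ` — i.e. the intersection of the (N−1)-faces
`Π_i ∩ ∂Σ` over all bounding hyperplanes through `P` is exactly `{P}` — then the span of the
normals of the (N−1)-faces of `Σ` containing `P` is all of ℝ^N. -/
theorem stmt8 {N m : ℕ} (hN : 1 ≤ N)
    (Sct : Set (EuclideanSpace ℝ (Fin N))) (hcomp : IsCompact Sct)
    (hreg : Sct = closure (interior Sct)) (hconn : IsConnected Sctᶜ)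
    (p ν : Fin m → EuclideanSpace ℝ (Fin N)) (hν : ∀ i, ‖ν i‖ = 1)
    (hdist : ∀ i j, i ≠ j → hypPlane (p i) (ν i) ≠ hypPlane (p j) (ν j))
    (hbd : frontier Sct ⊆ ⋃ i, hypPlane (p i) (ν i))
    (P : EuclideanSpace ℝ (Fin N)) (hP : P ∈ frontier Sct)
    (hvertex : (⋂ i ∈ {i : Fin m | P ∈ hypPlane (p i) (ν i)},
      (hypPlane (p i) (ν i) ∩ frontier Sct)) = {P}) :
    Submodule.span ℝ {v : EuclideanSpace ℝ (Fin N) |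
      ∃ i, P ∈ hypPlane (p i) (ν i) ∧ v = ν i} = ⊤ := by
  classical
  by_contra hspan
  set K : Submodule ℝ (EuclideanSpace ℝ (Fin N)) := Submodule.span ℝ
    {v : EuclideanSpace ℝ (Fin N) | ∃ i, P ∈ hypPlane (p i) (ν i) ∧ v = ν i} with hKdef
  -- obtain a nonzero vector orthogonal to all the normals through `P`
  have hKbot : Kᗮ ≠ ⊥ := fun h => hspan (Submodule.orthogonal_eq_bot_iff.mp h)
  obtain ⟨w0, hw0K, hw0ne⟩ := (Submodule.ne_bot_iff _).mp hKbot
  have hw0orth : ∀ i, P ∈ hypPlane (p i) (ν i) → ⟪w0, ν i⟫ = 0 := by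
    intro i hi
    have hmem : ν i ∈ K := Submodule.subset_span ⟨i, hi, rfl⟩
    have := (Submodule.mem_orthogonal K w0).mp hw0K (ν i) hmem
    rwa [real_inner_comm] at this
  -- a radius avoiding all hyperplanes not through `P`
  set F : Set (EuclideanSpace ℝ (Fin N)) := ⋃ j ∈ {j : Fin m | P ∉ hypPlane (p j) (ν j)}, hypPlane (p j) (ν j) with hF
  have hFclosed : IsClosed F :=
    Set.Finite.isClosed_biUnion (Set.toFinite _) (fun j _ => hypPlane_isClosed _ _)
  have hPF : P ∉ F := by
    intro h
    obtain ⟨j, hj, hj'⟩ := Set.mem_iUnion₂.mp h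
    exact hj hj'
  obtain ⟨r, hr, hball⟩ := Metric.isOpen_iff.mp hFclosed.isOpen_compl P hPF
  -- scale `w0`
  have hw0pos : 0 < ‖w0‖ := norm_pos_iff.mpr hw0ne
  set w : EuclideanSpace ℝ (Fin N) := (r / (2 * ‖w0‖)) • w0 with hw
  have hwnorm : ‖w‖ = r / 2 := by
    rw [hw, norm_smul, Real.norm_eq_abs, abs_of_pos (by positivity),
      div_mul_eq_mul_div, mul_comm 2 ‖w0‖, ← div_div, mul_div_assoc,
      div_self (ne_of_gt hw0pos), mul_one]
  have hworth : ∀ i, P ∈ hypPlane (p i) (ν i) → ⟪w, ν i⟫ = 0 := by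
    intro i hi
    rw [hw, real_inner_smul_left, hw0orth i hi, mul_zero]
  -- the dense set off all hyperplanes
  set D : Set (EuclideanSpace ℝ (Fin N)) := ⋂ i : Fin m, (hypPlane (p i) (ν i))ᶜ with hD
  have hDdense : Dense D := by
    apply dense_iInter_of_isOpen
    · exact fun i => (hypPlane_isClosed _ _).isOpen_compl
    · intro i
      apply hypPlane_compl_dense
      intro h
      have := hν i
      rw [h, norm_zero] at this
      exact one_ne_zero this.symm
  -- the segment from a generic point near `P` to its `w`-translate avoids the frontier
  have hfrontier_eq : (frontier Sct)ᶜ = interior Sct ∪ Sctᶜ := by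
    rw [hcomp.isClosed.frontier_eq]
    ext z
    simp only [Set.mem_compl_iff, Set.mem_diff, Set.mem_union, not_and, not_not]
    tauto
  have hseg : ∀ x' : EuclideanSpace ℝ (Fin N), dist x' P < r / 4 → x' ∈ D →
      segment ℝ x' (x' + w) ⊆ interior Sct ∪ Sctᶜ := by
    intro x' hx'P hx'D z hz
    rw [segment_eq_image'] at hz
    obtain ⟨θ, hθ, rfl⟩ := hz
    have hz' : x' + θ • (x' + w - x') = x' + θ • w := by
      congr 1
      congr 1
      abel
    show x' + θ • (x' + w - x') ∈ _
    rw [hz']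
    rw [← hfrontier_eq, Set.mem_compl_iff]
    intro hzfr
    -- z is within distance r of P
    have hdistz : dist (x' + θ • w) P < r := by
      calc dist (x' + θ • w) P ≤ dist (x' + θ • w) x' + dist x' P := dist_triangle _ _ _
        _ < r / 2 + r / 4 := by
            apply add_lt_add_of_le_of_lt _ hx'P
            rw [dist_eq_norm]
            have : x' + θ • w - x' = θ • w := by abel
            rw [this, norm_smul, Real.norm_eq_abs, abs_of_nonneg hθ.1, hwnorm]
            calc θ * (r / 2) ≤ 1 * (r / 2) := by
                  apply mul_le_mul_of_nonneg_right hθ.2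
                  positivity
              _ = r / 2 := one_mul _
        _ < r := by linarith
    -- hence z lies on a hyperplane through P... contradiction
    obtain ⟨i, hi⟩ := Set.mem_iUnion.mp (hbd hzfr)
    by_cases hPi : P ∈ hypPlane (p i) (ν i)
    · -- z off this plane since x' is off it and w is parallel to it
      have hx'i : x' ∉ hypPlane (p i) (ν i) := by
        have := Set.mem_iInter.mp hx'D i
        exact this
      apply hx'i
      simp only [hypPlane, Set.mem_setOf_eq] at hi ⊢
      have he : x' + θ • w - p i = (x' - p i) + θ • w := by abel
      rw [he, inner_add_left, real_inner_smul_left, hworth i hPi, mul_zero, add_zero] at hi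
      exact hi
    · -- z in the union of far planes, but z is in the ball
      have : x' + θ • w ∈ F := Set.mem_iUnion₂.mpr ⟨i, hPi, hi⟩
      exact (hball (Metric.mem_ball.mpr hdistz)) this
  -- P + w is in the closure of the interior
  have hdisj : Disjoint (interior Sct) Sctᶜ :=
    disjoint_compl_right.mono_left interior_subset
  have hPint : P ∈ closure (interior Sct) := by
    have : P ∈ closure Sct := frontier_subset_closure hP
    rwa [hcomp.isClosed.closure_eq, hreg] at this
  have hPext : P ∈ closure Sctᶜ := by
    have := hP
    rw [frontier_eq_closure_inter_closure] at this
    exact this.2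
  have hnear : ∀ (O : Set (EuclideanSpace ℝ (Fin N))), IsOpen O → P ∈ closure O → ∀ ε > (0:ℝ),
      ∃ x' ∈ O ∩ D, dist x' P < min ε (r / 4) := by
    intro O hO hPO ε hε
    have hδ : 0 < min ε (r / 4) := lt_min hε (by positivity)
    obtain ⟨x, hxO, hxd⟩ := Metric.mem_closure_iff.mp hPO _ hδ
    have hne : (O ∩ Metric.ball P (min ε (r / 4))).Nonempty :=
      ⟨x, hxO, Metric.mem_ball.mpr (by rwa [dist_comm] at hxd)⟩
    obtain ⟨x', hx'⟩ := hDdense.inter_open_nonempty _ (hO.inter Metric.isOpen_ball) hne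
    exact ⟨x', ⟨hx'.1.1, hx'.2⟩, Metric.mem_ball.mp hx'.1.2⟩
  have hUcl : P + w ∈ closure (interior Sct) := by
    rw [Metric.mem_closure_iff]
    intro ε hε
    obtain ⟨x', ⟨hx'O, hx'D⟩, hx'd⟩ := hnear (interior Sct) isOpen_interior hPint ε hε
    have hx'r : dist x' P < r / 4 := lt_of_lt_of_le hx'd (min_le_right _ _)
    have hsub := hseg x' hx'r hx'D
    have hconn' : IsPreconnected (segment ℝ x' (x' + w)) :=
      (convex_segment x' (x' + w)).isPreconnected
    have hres : segment ℝ x' (x' + w) ⊆ interior Sct :=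
      hconn'.subset_left_of_subset_union isOpen_interior hcomp.isClosed.isOpen_compl
        hdisj hsub ⟨x', left_mem_segment ℝ _ _, hx'O⟩
    refine ⟨x' + w, hres (right_mem_segment ℝ _ _), ?_⟩
    rw [dist_add_right]
    exact lt_of_lt_of_le (by rwa [dist_comm] at hx'd) (min_le_left _ _)
  have hVcl : P + w ∈ closure Sctᶜ := by
    rw [Metric.mem_closure_iff]
    intro ε hε
    obtain ⟨x', ⟨hx'O, hx'D⟩, hx'd⟩ := hnear Sctᶜ hcomp.isClosed.isOpen_compl hPext ε hε
    have hx'r : dist x' P < r / 4 := lt_of_lt_of_le hx'd (min_le_right _ _)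
    have hsub := hseg x' hx'r hx'D
    have hconn' : IsPreconnected (segment ℝ x' (x' + w)) :=
      (convex_segment x' (x' + w)).isPreconnected
    have hres : segment ℝ x' (x' + w) ⊆ Sctᶜ :=
      hconn'.subset_right_of_subset_union isOpen_interior hcomp.isClosed.isOpen_compl
        hdisj hsub ⟨x', left_mem_segment ℝ _ _, hx'O⟩
    refine ⟨x' + w, hres (right_mem_segment ℝ _ _), ?_⟩
    rw [dist_add_right]
    exact lt_of_lt_of_le (by rwa [dist_comm] at hx'd) (min_le_left _ _)
  -- P + w is in the frontier and on all hyperplanes through P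
  have hfr : P + w ∈ frontier Sct := by
    rw [frontier_eq_closure_inter_closure]
    exact ⟨(closure_mono interior_subset) hUcl, hVcl⟩
  have hmem : P + w ∈ ⋂ i ∈ {i : Fin m | P ∈ hypPlane (p i) (ν i)},
      (hypPlane (p i) (ν i) ∩ frontier Sct) := by
    apply Set.mem_biInter
    intro i hi
    refine ⟨?_, hfr⟩
    simp only [hypPlane, Set.mem_setOf_eq] at hi ⊢
    have he : P + w - p i = (P - p i) + w := by abel
    rw [he, inner_add_left, hi, hworth i hi, add_zero]
  rw [hvertex] at hmem
  have : w = 0 := by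
    have := Set.mem_singleton_iff.mp hmem
    rwa [add_eq_left] at this
  rw [this, norm_zero] at hwnorm
  linarith
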